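/- The full strategy set of an IoT mobile device, namely S₀ ∩ {α : D(α) ≤ D_MAX} ∩ {α : E(α) ≤ E_MAX} ∩ {α : P(α) ≤ P_MAX}, is a convex subset of ℝ^N. -/

import Mathlib

open Finset

noncomputable section

/-- Total offloading fraction `s(α) = Σ_j α_j`. -/
def sTot {N : ℕ} (α : Fin N → ℝ) : ℝ := ∑ j, α j

/-- Local computing delay contribution. -/
def Gfun {N : ℕ} (lam c f : ℝ) (α : Fin N → ℝ) : ℝ :=
  (1 - sTot α) * c / (f - (1 - sTot α) * lam * c)

/-- Wireless transmission delay contribution. -/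
def Hfun {N : ℕ} (lam z r Sbar : ℝ) (α : Fin N → ℝ) : ℝ :=
  sTot α * (lam * Sbar * sTot α / (2 * (1 - lam * z * sTot α / r)) + z / r)

/-- Expected total delay. -/
def Dfun {N : ℕ} (Nc : ℕ) (lam c z r f Sbar : ℝ) (fOSP w K : Fin N → ℝ)
    (α : Fin N → ℝ) : ℝ :=
  Gfun lam c f α + Hfun lam z r Sbar α + (∑ j, α j * w j) +
    (∑ j ∈ Finset.univ.filter (fun j : Fin N => (j : ℕ) < Nc), α j * c / fOSP j) +
    (∑ j ∈ Finset.univ.filter (fun j : Fin N => Nc ≤ (j : ℕ)),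
      α j * c / (fOSP j - K j - α j * lam * c))

/-- Expected energy consumption. -/
def Efun {N : ℕ} (lam c z r f Sbar εloc εtx : ℝ) (α : Fin N → ℝ) : ℝ :=
  εloc * Gfun lam c f α + εtx * Hfun lam z r Sbar α

/-- Expected payment. -/
def Pfun {N : ℕ} (lam c : ℝ) (price : Fin N → ℝ) (α : Fin N → ℝ) : ℝ :=
  ∑ j, α j * price j * c * lam

/-- Basic feasible set `S₀`. -/
def S0 {N : ℕ} (Nc : ℕ) (lam c z r f : ℝ) (fOSP K : Fin N → ℝ) :
    Set (Fin N → ℝ) :=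
  {α | (∀ j, 0 ≤ α j) ∧ sTot α ≤ 1 ∧ (1 - sTot α) * lam * c < f ∧
    lam * z * sTot α < r ∧ ∀ j : Fin N, Nc ≤ (j : ℕ) → K j + α j * lam * c < fOSP j}

/-!
Every constraint function is convex on the polyhedron `S₀`, so the strategy set, an intersection
of sublevel sets, is convex. The only nonlinear terms are of the form `u² / v` with `u, v` affine
and `v > 0`, which is convex by Sedrakyan's inequality: the transmission delay is
`(λ S̄ / 2) · s² / (1 - λ z s / r) + z s / r`, and each queueing delay satisfies
`t c / (A - t λ c) = (A / λ) · 1² / (A - t λ c) - 1 / λ` with `A ≥ 0`.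
-/

section General

variable {𝕜 E β ι : Type*} [Semiring 𝕜] [PartialOrder 𝕜] [AddCommMonoid E] [SMul 𝕜 E]
  [AddCommMonoid β] [PartialOrder β] [IsOrderedAddMonoid β] [Module 𝕜 β] {s : Set E}

theorem ConvexOn.finset_sum (t : Finset ι) {f : ι → E → β} (hs : Convex 𝕜 s)
    (hf : ∀ i ∈ t, ConvexOn 𝕜 s (f i)) : ConvexOn 𝕜 s fun x => ∑ i ∈ t, f i x := by
  classical
  induction t using Finset.induction_on with
  | empty => simpa using convexOn_const (0 : β) hs
  | insert i t hi ih =>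
    simp_rw [Finset.sum_insert hi]
    exact (hf i (mem_insert_self i t)).add (ih fun j hj => hf j (mem_insert_of_mem hj))

end General

theorem convexOn_apply_mul {ι : Type*} {s : Set (ι → ℝ)} (hs : Convex ℝ s) (j : ι) (k : ℝ) :
    ConvexOn ℝ s fun α => α j * k :=
  ((LinearMap.proj (R := ℝ) (φ := fun _ : ι => ℝ) j).smulRight k).convexOn hs

section Affine

variable {E : Type*} [AddCommGroup E] [Module ℝ E]

theorem convexOn_sq_div_affineMap (u v : E →ᵃ[ℝ] ℝ) :
    ConvexOn ℝ {x | 0 < v x} fun x => u x ^ 2 / v x := by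
  refine convexOn_iff_pairwise_pos.2 ⟨(convex_Ioi 0).affine_preimage v, ?_⟩
  intro x hx y hy _ a b ha hb hab
  simp only [Convex.combo_affine_apply hab, smul_eq_mul]
  have hv : ∀ i ∈ (univ : Finset (Fin 2)), 0 < ![a * v x, b * v y] i := by
    simp only [mem_univ, forall_true_left, Fin.forall_fin_two]
    exact ⟨mul_pos ha hx, mul_pos hb hy⟩
  -- Sedrakyan's form of Cauchy–Schwarz, since `(a u)² / (a v) = a (u² / v)`
  have := sq_sum_div_le_sum_sq_div univ ![a * u x, b * u y] hv
  simp only [Fin.sum_univ_two, Matrix.cons_val_zero, Matrix.cons_val_one] at this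
  convert this using 2 <;> field_simp

theorem convexOn_mul_div_sub_affineMap (t : E →ᵃ[ℝ] ℝ) {A l : ℝ} (hA : 0 ≤ A) (hl : 0 < l)
    (c : ℝ) : ConvexOn ℝ {x | t x * l * c < A} fun x => t x * c / (A - t x * l * c) := by
  set v : E →ᵃ[ℝ] ℝ := AffineMap.const ℝ E A - (l * c) • t
  have hv : ∀ x, v x = A - t x * l * c := fun x => by
    simp only [v, AffineMap.coe_sub, AffineMap.coe_const, AffineMap.coe_smul, Pi.sub_apply,
      Function.const_apply, Pi.smul_apply, smul_eq_mul]
    ring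
  have hdom : {x | t x * l * c < A} = {x | 0 < v x} := by ext x; simp [hv]
  rw [hdom]
  refine (((convexOn_sq_div_affineMap (AffineMap.const ℝ E 1) v).smul
    (div_nonneg hA hl.le)).add_const (-1 / l)).congr fun x hx => ?_
  have hx' : A - t x * l * c ≠ 0 := by rw [← hv]; exact hx.ne'
  simp only [Pi.add_apply, AffineMap.const_apply, hv, smul_eq_mul]
  have htc : t x * c = (A - (A - t x * l * c)) / l := by field_simp; ring
  rw [htc]
  generalize A - t x * l * c = w at hx' ⊢
  field_simp
  ring

end Affine

section Model

variable {N Nc : ℕ} {lam c z r f Sbar : ℝ} {fOSP w K price : Fin N → ℝ}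

def sTotLinearMap : (Fin N → ℝ) →ₗ[ℝ] ℝ where
  toFun := sTot
  map_add' _ _ := Finset.sum_add_distrib
  map_smul' _ _ := (Finset.mul_sum _ _ _).symm

@[simp]
theorem sTotLinearMap_apply (α : Fin N → ℝ) : sTotLinearMap α = sTot α := rfl

theorem convexOn_Gfun (hlam : 0 < lam) (hf : 0 ≤ f) :
    ConvexOn ℝ {α : Fin N → ℝ | (1 - sTot α) * lam * c < f} (Gfun lam c f) :=
  convexOn_mul_div_sub_affineMap (AffineMap.const ℝ _ 1 - sTotLinearMap.toAffineMap) hf hlam c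

theorem convexOn_Hfun (hlam : 0 ≤ lam) (hr : 0 < r) (hSbar : 0 ≤ Sbar) :
    ConvexOn ℝ {α : Fin N → ℝ | lam * z * sTot α < r} (Hfun lam z r Sbar) := by
  set s : (Fin N → ℝ) →ᵃ[ℝ] ℝ := sTotLinearMap.toAffineMap
  set v : (Fin N → ℝ) →ᵃ[ℝ] ℝ := AffineMap.const ℝ _ 1 - (lam * z / r) • s
  have hv : ∀ α, v α = 1 - lam * z * sTot α / r := fun α => by
    simp only [v, s, AffineMap.coe_sub, AffineMap.coe_const, AffineMap.coe_smul, Pi.sub_apply,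
      Function.const_apply, Pi.smul_apply, LinearMap.coe_toAffineMap, sTotLinearMap_apply,
      smul_eq_mul]
    ring
  have hdom : {α : Fin N → ℝ | lam * z * sTot α < r} = {α | 0 < v α} := by
    ext α; simp only [Set.mem_ofPred_eq, hv, sub_pos, div_lt_one hr]
  rw [hdom]
  refine (((convexOn_sq_div_affineMap s v).smul (by positivity : 0 ≤ lam * Sbar / 2)).add
    (((z / r) • sTotLinearMap).convexOn ((convex_Ioi 0).affine_preimage v))).congr fun α _ => ?_
  simp only [Pi.add_apply, hv, smul_eq_mul, LinearMap.smul_apply, Hfun, s,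
    LinearMap.coe_toAffineMap, sTotLinearMap_apply, div_mul_eq_div_div]
  ring

theorem convex_S0 : Convex ℝ (S0 Nc lam c z r f fOSP K) := by
  rintro α ⟨hα0, hα1, hαf, hαr, hαK⟩ β ⟨hβ0, hβ1, hβf, hβr, hβK⟩ a b ha hb hab
  have hs : sTot (a • α + b • β) = a * sTot α + b * sTot β := by
    simpa using map_add sTotLinearMap (a • α) (b • β)
  have combo_lt {x y A : ℝ} (hx : x < A) (hy : y < A) : a * x + b * y < A :=
    convex_Iio A hx hy ha hb hab
  obtain rfl : b = 1 - a := by linarith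
  refine ⟨fun j => ?_, ?_, ?_, ?_, fun j hj => ?_⟩ <;>
    simp only [hs, Pi.add_apply, Pi.smul_apply, smul_eq_mul]
  · have := hα0 j; have := hβ0 j; positivity
  · nlinarith
  · linarith [combo_lt hαf hβf]
  · linarith [combo_lt hαr hβr]
  · linarith [combo_lt (hαK j hj) (hβK j hj)]

theorem convexOn_Dfun (hlam : 0 < lam) (hr : 0 < r) (hf : 0 ≤ f) (hSbar : 0 ≤ Sbar)
    (hK : ∀ j : Fin N, Nc ≤ (j : ℕ) → K j < fOSP j) :
    ConvexOn ℝ (S0 Nc lam c z r f fOSP K) (Dfun Nc lam c z r f Sbar fOSP w K) := by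
  have hS0 : Convex ℝ (S0 Nc lam c z r f fOSP K) := convex_S0
  have hG := (convexOn_Gfun (c := c) hlam hf).subset (fun α hα => hα.2.2.1) hS0
  have hH := (convexOn_Hfun (z := z) hlam.le hr hSbar).subset (fun α hα => hα.2.2.2.1) hS0
  have hLoad := ConvexOn.finset_sum univ hS0 fun j _ => convexOn_apply_mul hS0 j (w j)
  have hCloud := ConvexOn.finset_sum {j : Fin N | (j : ℕ) < Nc} hS0 fun j _ =>
    (convexOn_apply_mul hS0 j (c / fOSP j)).congr fun α _ => (mul_div_assoc _ _ _).symm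
  have hEdge := ConvexOn.finset_sum {j : Fin N | Nc ≤ (j : ℕ)} hS0 fun j hj => by
    have hj : Nc ≤ (j : ℕ) := (mem_filter.1 hj).2
    refine (convexOn_mul_div_sub_affineMap (LinearMap.proj j).toAffineMap
      (sub_nonneg.2 (hK j hj).le) hlam c).subset (fun α hα => ?_) hS0
    have := hα.2.2.2.2 j hj
    show α j * lam * c < fOSP j - K j
    linarith
  exact (((hG.add hH).add hLoad).add hCloud).add hEdge

theorem convexOn_Efun {εloc εtx : ℝ} (hlam : 0 < lam) (hr : 0 < r) (hf : 0 ≤ f)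
    (hSbar : 0 ≤ Sbar) (hεloc : 0 ≤ εloc) (hεtx : 0 ≤ εtx) :
    ConvexOn ℝ (S0 Nc lam c z r f fOSP K) (Efun lam c z r f Sbar εloc εtx) := by
  have hS0 : Convex ℝ (S0 Nc lam c z r f fOSP K) := convex_S0
  have hG := (convexOn_Gfun (c := c) hlam hf).subset (fun α hα => hα.2.2.1) hS0
  have hH := (convexOn_Hfun (z := z) hlam.le hr hSbar).subset (fun α hα => hα.2.2.2.1) hS0
  exact (hG.smul hεloc).add (hH.smul hεtx)

theorem convexOn_Pfun {s : Set (Fin N → ℝ)} (hs : Convex ℝ s) : ConvexOn ℝ s (Pfun lam c price) :=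
  ConvexOn.finset_sum univ hs fun j _ =>
    (convexOn_apply_mul hs j (price j * c * lam)).congr fun α _ => by simp only [mul_assoc]

end Model

theorem strategySet_convex_general (N Nc : ℕ)
    (lam c z r f Sbar : ℝ) (hlam : 0 < lam) (hr : 0 < r)
    (hf : 0 < f) (hSbar : 0 < Sbar)
    (εloc εtx : ℝ) (hεloc : 0 ≤ εloc) (hεtx : 0 ≤ εtx)
    (fOSP w K price : Fin N → ℝ)
    (hK : ∀ j : Fin N, Nc ≤ (j : ℕ) → 0 ≤ K j ∧ K j < fOSP j)
    (DMAX EMAX PMAX : ℝ) :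
    Convex ℝ (S0 Nc lam c z r f fOSP K ∩
      {α : Fin N → ℝ | Dfun Nc lam c z r f Sbar fOSP w K α ≤ DMAX} ∩
      {α : Fin N → ℝ | Efun lam c z r f Sbar εloc εtx α ≤ EMAX} ∩
      {α : Fin N → ℝ | Pfun lam c price α ≤ PMAX}) := by
  have hD : ConvexOn ℝ (S0 Nc lam c z r f fOSP K) (Dfun Nc lam c z r f Sbar fOSP w K) :=
    convexOn_Dfun hlam hr hf.le hSbar.le fun j hj => (hK j hj).2
  have hE : ConvexOn ℝ (S0 Nc lam c z r f fOSP K) (Efun lam c z r f Sbar εloc εtx) :=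
    convexOn_Efun hlam hr hf.le hSbar.le hεloc hεtx
  have hDE := (hE.subset Set.inter_subset_left (hD.convex_le DMAX)).convex_le EMAX
  exact (convexOn_Pfun hDE).convex_le PMAX

/-- The full strategy set of an IoT MD is a convex subset of `ℝ^N`. -/
theorem strategySet_convex (N Nc : ℕ) (hN : 1 ≤ N) (hNc : Nc ≤ N)
    (lam c z r f Sbar : ℝ) (hlam : 0 < lam) (hc : 0 < c) (hz : 0 < z) (hr : 0 < r)
    (hf : 0 < f) (hSbar : 0 < Sbar)
    (εloc εtx : ℝ) (hεloc : 0 ≤ εloc) (hεtx : 0 ≤ εtx)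
    (fOSP w K price : Fin N → ℝ)
    (hfOSP : ∀ j, 0 < fOSP j) (hw : ∀ j, 0 ≤ w j) (hprice : ∀ j, 0 ≤ price j)
    (hK : ∀ j : Fin N, Nc ≤ (j : ℕ) → 0 ≤ K j ∧ K j < fOSP j)
    (DMAX EMAX PMAX : ℝ) (hDMAX : 0 < DMAX) (hEMAX : 0 < EMAX) (hPMAX : 0 < PMAX) :
    Convex ℝ (S0 Nc lam c z r f fOSP K ∩
      {α : Fin N → ℝ | Dfun Nc lam c z r f Sbar fOSP w K α ≤ DMAX} ∩
      {α : Fin N → ℝ | Efun lam c z r f Sbar εloc εtx α ≤ EMAX} ∩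
      {α : Fin N → ℝ | Pfun lam c price α ≤ PMAX}) :=
  strategySet_convex_general N Nc lam c z r f Sbar hlam hr hf hSbar εloc εtx hεloc hεtx fOSP w K
    price hK DMAX EMAX PMAX

end
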